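/- Let X₁, X₂, … be a strictly stationary and ergodic sequence with finite essential supremum γ, P(X₁ = γ) = P(X₁ = γ − a) = 0 for fixed a > 0, and let U be any real random variable (possibly dependent on the sequence). Define Rₙ = Xₙ + U. Then for any sequence of integers (kₙ) with 1 ≤ kₙ ≤ n and kₙ/n → 1, (1/n) Σ_{i=1}^n 1{R_{kₙ:n} − a < R_i < R_{kₙ:n}} converges almost surely to P(X₁ > γ − a) as n → ∞. -/

import Mathlib

/-!
Birkhoff's ergodic theorem for bounded observables (proved by the Katznelson–Weiss covering
argument, using that the limsup of the averages is an invariant, hence a.e. constant, function)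
shows that almost surely, for every rational `q`, the proportion of `X₀, …, X_{n-1}` exceeding
`q` tends to `G q := P(X₀ > q)`; stationarity gives `Xᵢ ≤ γ` for all `i` almost surely.
Since `G q > 0` for `q < γ` and `kₙ / n → 1`, the order statistic `X_{kₙ:n}` tends to `γ`.
The count in the window `(X_{kₙ:n} - a, X_{kₙ:n})` is the number of points above
`X_{kₙ:n} - a` minus the number of points at least `X_{kₙ:n}`; as `G` is continuous at `γ - a`
and at `γ` (no atoms there), these proportions tend to `G (γ - a)` and `G γ = 0`.
Adding `U` shifts the observations and the order statistic alike, so the count does not change.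
-/

open MeasureTheory Filter Set
open scoped Topology ENNReal

noncomputable section

/-- The shift map on real sequences. -/
def seqShift (y : ℕ → ℝ) : ℕ → ℝ := fun n => y (n + 1)

/-- The path map associating to each sample point the sequence of observations. -/
def path {Ω : Type*} (X : ℕ → Ω → ℝ) (ω : Ω) : ℕ → ℝ := fun n => X n ω

/-- The `k`-th smallest value (k counted from 1) among `x 0, …, x (n-1)`. -/
def ordStat (k n : ℕ) (x : ℕ → ℝ) : ℝ :=
  ((List.ofFn (fun i : Fin n => x i)).insertionSort (· ≤ ·)).getD (k - 1) 0

/-- Number of observations among `x 0, …, x (n-1)` in the left `a`-neighborhood of the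
`k`-th order statistic. -/
def nearCount (k n : ℕ) (a : ℝ) (x : ℕ → ℝ) : ℕ :=
  ((Finset.range n).filter
    (fun i => ordStat k n x - a < x i ∧ x i < ordStat k n x)).card

/-- Sum of observations among `x 0, …, x (n-1)` in the left `a`-neighborhood of the
`k`-th order statistic. -/
def nearSum (k n : ℕ) (a : ℝ) (x : ℕ → ℝ) : ℝ :=
  ∑ i ∈ Finset.range n,
    if ordStat k n x - a < x i ∧ x i < ordStat k n x then x i else 0

/-- The right endpoint `sup {x : P(X ≤ x) < 1}` of the support of `X`, as an extended real. -/
def rightEndpoint {Ω : Type*} [MeasurableSpace Ω] (μ : Measure Ω) (X : Ω → ℝ) : EReal :=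
  sSup ((fun r : ℝ => (r : EReal)) '' {r : ℝ | μ {ω | X ω ≤ r} < 1})

open scoped Finset

section BirkhoffAverage

variable {α : Type*} {T : α → α} {f : α → ℝ} {M : ℝ}

lemma abs_birkhoffAverage_le (hM : ∀ x, |f x| ≤ M) (n : ℕ) (x : α) :
    |birkhoffAverage ℝ T f n x| ≤ M := by
  rcases n.eq_zero_or_pos with rfl | hn
  · simpa using (abs_nonneg _).trans (hM x)
  rw [birkhoffAverage, smul_eq_mul, abs_mul, abs_inv, Nat.abs_cast,
    inv_mul_le_iff₀ (by positivity)]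
  calc |birkhoffSum T f n x| ≤ ∑ k ∈ Finset.range n, |f (T^[k] x)| :=
        Finset.abs_sum_le_sum_abs _ _
    _ ≤ n * M := (Finset.sum_le_sum fun k (_ : k ∈ Finset.range n) => hM (T^[k] x)).trans_eq
        (by simp)

lemma isBoundedUnder_le_birkhoffAverage (hM : ∀ x, |f x| ≤ M) (x : α) :
    IsBoundedUnder (· ≤ ·) atTop (fun n => birkhoffAverage ℝ T f n x) :=
  isBoundedUnder_of ⟨M, fun n => (abs_le.1 (abs_birkhoffAverage_le hM n x)).2⟩

lemma isBoundedUnder_ge_birkhoffAverage (hM : ∀ x, |f x| ≤ M) (x : α) :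
    IsBoundedUnder (· ≥ ·) atTop (fun n => birkhoffAverage ℝ T f n x) :=
  isBoundedUnder_of ⟨-M, fun n => (abs_le.1 (abs_birkhoffAverage_le hM n x)).1⟩

lemma limsup_add_eq_of_tendsto_zero {u v : ℕ → ℝ} (hu₁ : IsBoundedUnder (· ≤ ·) atTop u)
    (hu₂ : IsBoundedUnder (· ≥ ·) atTop u) (hv : Tendsto v atTop (𝓝 0)) :
    limsup (u + v) atTop = limsup u atTop := by
  have hu₃ : IsCoboundedUnder (· ≤ ·) atTop u := hu₂.isCoboundedUnder_le
  refine le_antisymm ?_ ?_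
  · simpa [hv.limsup_eq] using limsup_add_le hu₂ hu₁ hv.isBoundedUnder_ge.isCoboundedUnder_le
      hv.isBoundedUnder_le
  · simpa [hv.liminf_eq] using le_limsup_add hu₁ hu₃ hv.isBoundedUnder_le hv.isBoundedUnder_ge

lemma limsup_birkhoffAverage_apply (hM : ∀ x, |f x| ≤ M) (x : α) :
    limsup (fun n => birkhoffAverage ℝ T f n (T x)) atTop
      = limsup (fun n => birkhoffAverage ℝ T f n x) atTop := by
  have hbdd : Bornology.IsBounded (range f) :=
    (Metric.isBounded_iff_subset_closedBall 0).2 ⟨M, by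
      rintro _ ⟨y, rfl⟩; simpa using hM y⟩
  rw [← limsup_add_eq_of_tendsto_zero (isBoundedUnder_le_birkhoffAverage hM x)
    (isBoundedUnder_ge_birkhoffAverage hM x)
    (tendsto_birkhoffAverage_apply_sub_birkhoffAverage' ℝ hbdd T x)]
  simp only [Pi.add_def, add_sub_cancel]

lemma exists_mul_le_birkhoffSum_of_lt_limsup (hM : ∀ x, |f x| ≤ M) {x : α} {d : ℝ}
    (hd : d < limsup (fun n => birkhoffAverage ℝ T f n x) atTop) :
    ∃ n, 0 < n ∧ n * d ≤ birkhoffSum T f n x := by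
  obtain ⟨n, hn, hdn⟩ := ((frequently_lt_of_lt_limsup
    (isBoundedUnder_ge_birkhoffAverage hM x).isCoboundedUnder_le hd).and_eventually
    (eventually_gt_atTop 0)).exists
  refine ⟨n, hdn, ?_⟩
  rw [birkhoffAverage, smul_eq_mul, ← div_eq_inv_mul, lt_div_iff₀ (by exact_mod_cast hdn)] at hn
  linarith

lemma le_birkhoffSum_of_forall_exists {g : α → ℝ} {N : ℕ} {d m : ℝ} (hm : ∀ x, m ≤ g x)
    (hcover : ∀ x, ∃ n, 0 < n ∧ n ≤ N ∧ n * d ≤ birkhoffSum T g n x) (L : ℕ) (x : α) :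
    L * d - N * (|d| + |m|) ≤ birkhoffSum T g L x := by
  -- peel off a good block at the start and recurse; a final stretch of length at most `N`
  -- is only bounded below by `m`, which costs at most `N * (|d| + |m|)`
  induction L using Nat.strong_induction_on generalizing x with
  | _ L ih =>
  by_cases hL : L ≤ N
  · have hsum : L * m ≤ birkhoffSum T g L x := by
      simpa [birkhoffSum] using
        Finset.card_nsmul_le_sum (Finset.range L) _ m fun k _ => hm (T^[k] x)
    have hdm : d - m ≤ |d| + |m| := by linarith [le_abs_self d, neg_abs_le m]
    have hLN : (L : ℝ) ≤ N := by exact_mod_cast hL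
    nlinarith [abs_nonneg d, abs_nonneg m, (L.cast_nonneg : (0 : ℝ) ≤ L)]
  · obtain ⟨n, hn, hnN, hnd⟩ := hcover x
    obtain ⟨L', rfl⟩ : ∃ L', L = n + L' := ⟨L - n, by omega⟩
    have := ih L' (by omega) (T^[n] x)
    rw [birkhoffSum_add]
    push_cast
    linarith

variable [MeasurableSpace α] {μ : Measure α}

lemma measurable_birkhoffSum (hT : Measurable T) (hf : Measurable f) (n : ℕ) :
    Measurable (birkhoffSum T f n) :=
  Finset.measurable_sum _ fun k _ => hf.comp (hT.iterate k)

lemma Ergodic.exists_ae_limsup_birkhoffAverage_eq (hT : Ergodic T μ) (hf : Measurable f)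
    (hM : ∀ x, |f x| ≤ M) :
    ∃ c, ∀ᵐ x ∂μ, limsup (fun n => birkhoffAverage ℝ T f n x) atTop = c := by
  have hmeas : Measurable fun x => limsup (fun n => birkhoffAverage ℝ T f n x) atTop :=
    Measurable.limsup fun n => (measurable_birkhoffSum hT.measurable hf n).const_smul (n : ℝ)⁻¹
  exact hT.ae_eq_const_of_ae_eq_comp₀ hmeas.nullMeasurable
    (Eventually.of_forall fun x => limsup_birkhoffAverage_apply hM x)

lemma integrable_birkhoffSum (hT : MeasurePreserving T μ μ) {g : α → ℝ} (hg : Integrable g μ)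
    (n : ℕ) : Integrable (birkhoffSum T g n) μ :=
  integrable_finsetSum _ fun k _ => (hT.iterate k).integrable_comp_of_integrable hg

lemma integral_birkhoffSum (hT : MeasurePreserving T μ μ) {g : α → ℝ} (hg : Integrable g μ)
    (n : ℕ) : ∫ x, birkhoffSum T g n x ∂μ = n * ∫ x, g x ∂μ := by
  have hcomp : ∀ k, ∫ x, g (T^[k] x) ∂μ = ∫ x, g x ∂μ := fun k => by
    have hgk : AEStronglyMeasurable g (μ.map T^[k]) := by
      rw [(hT.iterate k).map_eq]; exact hg.aestronglyMeasurable
    rw [← integral_map (hT.iterate k).measurable.aemeasurable hgk, (hT.iterate k).map_eq]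
  have hint : ∀ k, Integrable (fun x => g (T^[k] x)) μ := fun k =>
    (hT.iterate k).integrable_comp_of_integrable hg
  simp only [birkhoffSum]
  rw [integral_finsetSum _ fun k _ => hint k]
  simp [hcomp]

variable [IsProbabilityMeasure μ]

lemma le_integral_of_le_birkhoffSum (hT : MeasurePreserving T μ μ)
    {g : α → ℝ} (hg : Integrable g μ) {d K : ℝ}
    (h : ∀ L : ℕ, ∀ x, L * d - K ≤ birkhoffSum T g L x) : d ≤ ∫ x, g x ∂μ := by
  have hL : ∀ L : ℕ, 0 < L → d - K / L ≤ ∫ x, g x ∂μ := fun L hL => by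
    have hint : L * d - K ≤ L * ∫ x, g x ∂μ := by
      rw [← integral_birkhoffSum hT hg]
      simpa using integral_mono (integrable_const _) (integrable_birkhoffSum hT hg L) (h L)
    have hL' : (0 : ℝ) < L := by exact_mod_cast hL
    rw [sub_le_iff_le_add, ← sub_le_iff_le_add', le_div_iff₀ hL']
    linarith
  have hlim : Tendsto (fun L : ℕ => d - K / L) atTop (𝓝 d) := by
    simpa using tendsto_const_nhds.sub (tendsto_const_div_atTop_nhds_zero_nat K)
  exact le_of_tendsto hlim ((eventually_gt_atTop 0).mono hL)

lemma le_integral_add_of_forall_notMem_exists (hT : MeasurePreserving T μ μ) (hf : Measurable f)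
    (hM : ∀ x, |f x| ≤ M) {E : Set α} (hE : MeasurableSet E) {N : ℕ} {d : ℝ}
    (hcover : ∀ x ∉ E, ∃ n, 0 < n ∧ n ≤ N ∧ n * d ≤ birkhoffSum T f n x) :
    d ≤ ∫ x, f x ∂μ + (M + |d|) * μ.real E := by
  -- raising `f` on `E` makes every point a starting point of a good block
  set g : α → ℝ := f + E.indicator fun _ => M + |d|
  have hfint : Integrable f μ :=
    (integrable_const M).mono' hf.aestronglyMeasurable (Eventually.of_forall hM)
  have hgint : Integrable g μ := hfint.add ((integrable_const _).indicator hE)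
  have hfg : ∀ x, f x ≤ g x := fun x => le_add_of_nonneg_right
    (Set.indicator_nonneg (fun _ _ => by positivity [(abs_nonneg (f x)).trans (hM x)]) x)
  have hgcover : ∀ x, ∃ n, 0 < n ∧ n ≤ N + 1 ∧ n * d ≤ birkhoffSum T g n x := fun x => by
    by_cases hx : x ∈ E
    · refine ⟨1, one_pos, by omega, ?_⟩
      simp only [birkhoffSum_one, g, Pi.add_apply, Set.indicator_of_mem hx, Nat.cast_one,
        one_mul]
      linarith [neg_abs_le (f x), hM x, le_abs_self d]
    · obtain ⟨n, hn, hnN, hnd⟩ := hcover x hx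
      exact ⟨n, hn, by omega, hnd.trans (Finset.sum_le_sum fun k _ => hfg (T^[k] x))⟩
  have hgint_eq : ∫ x, g x ∂μ = ∫ x, f x ∂μ + (M + |d|) * μ.real E := by
    simp only [g, Pi.add_apply]
    rw [integral_add hfint ((integrable_const _).indicator hE), integral_indicator_const _ hE,
      smul_eq_mul, mul_comm]
  rw [← hgint_eq]
  exact le_integral_of_le_birkhoffSum hT hgint (le_birkhoffSum_of_forall_exists (m := -M)
    (fun x => by linarith [neg_abs_le (f x), hM x, hfg x]) hgcover)

theorem MeasureTheory.MeasurePreserving.le_integral_of_ae_limsup_birkhoffAverage_eq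
    (hT : MeasurePreserving T μ μ) (hf : Measurable f) (hM : ∀ x, |f x| ≤ M) {c : ℝ}
    (hc : ∀ᵐ x ∂μ, limsup (fun n => birkhoffAverage ℝ T f n x) atTop = c) :
    c ≤ ∫ x, f x ∂μ := by
  refine le_of_forall_lt_imp_le_of_dense fun d hd => ?_
  set E : ℕ → Set α := fun N => {x | ∀ n, 0 < n → n ≤ N → birkhoffSum T f n x < n * d}
  have hEm : ∀ N, MeasurableSet (E N) := fun N => by
    simp only [E, Set.ofPred_forall]
    exact .iInter fun n => .iInter fun _ => .iInter fun _ =>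
      measurableSet_lt (measurable_birkhoffSum hT.measurable hf n) measurable_const
  have hEanti : Antitone E := fun N N' hNN' x hx n hn hnN => hx n hn (hnN.trans hNN')
  have hEnull : μ (⋂ N, E N) = 0 := by
    refine measure_mono_null (fun x hx => ?_) (ae_iff.1 hc)
    intro hxc
    obtain ⟨n, hn, hnd⟩ := exists_mul_le_birkhoffSum_of_lt_limsup hM (hd.trans_eq hxc.symm)
    exact hnd.not_gt (Set.mem_iInter.1 hx n n hn le_rfl)
  have hE0 : Tendsto (fun N => μ.real (E N)) atTop (𝓝 0) := by
    have := tendsto_measure_iInter_atTop (fun N => (hEm N).nullMeasurableSet) hEanti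
      ⟨0, measure_ne_top μ _⟩
    rw [hEnull] at this
    exact (ENNReal.tendsto_toReal ENNReal.zero_ne_top).comp this
  refine ge_of_tendsto' (by simpa using tendsto_const_nhds.add (hE0.const_mul (M + |d|)))
    fun N => le_integral_add_of_forall_notMem_exists hT hf hM (hEm N) (N := N) fun x hx => ?_
  simpa [E] using hx

theorem Ergodic.ae_limsup_birkhoffAverage_le (hT : Ergodic T μ) (hf : Measurable f)
    (hM : ∀ x, |f x| ≤ M) :
    ∀ᵐ x ∂μ, limsup (fun n => birkhoffAverage ℝ T f n x) atTop ≤ ∫ x, f x ∂μ := by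
  obtain ⟨c, hc⟩ := hT.exists_ae_limsup_birkhoffAverage_eq hf hM
  have hcf := hT.toMeasurePreserving.le_integral_of_ae_limsup_birkhoffAverage_eq hf hM hc
  filter_upwards [hc] with x hx
  exact hx.trans_le hcf

theorem Ergodic.ae_tendsto_birkhoffAverage (hT : Ergodic T μ) (hf : Measurable f)
    (hM : ∀ x, |f x| ≤ M) :
    ∀ᵐ x ∂μ, Tendsto (fun n => birkhoffAverage ℝ T f n x) atTop (𝓝 (∫ x, f x ∂μ)) := by
  have hM' : ∀ x, |(-f) x| ≤ M := fun x => by simpa using hM x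
  filter_upwards [hT.ae_limsup_birkhoffAverage_le hf hM,
    hT.ae_limsup_birkhoffAverage_le hf.neg hM'] with x hup hlow
  refine tendsto_order.2 ⟨fun l hl => ?_, fun u hu =>
    eventually_lt_of_limsup_lt (hup.trans_lt hu) (isBoundedUnder_le_birkhoffAverage hM x)⟩
  have hl' : ∫ x, (-f) x ∂μ < -l := by simpa [integral_neg] using hl
  have := eventually_lt_of_limsup_lt (hlow.trans_lt hl') (isBoundedUnder_le_birkhoffAverage hM' x)
  simpa [birkhoffAverage_neg] using this

end BirkhoffAverage

section Stationary

lemma seqShift_iterate_apply (i : ℕ) (y : ℕ → ℝ) (j : ℕ) : seqShift^[i] y j = y (j + i) := by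
  induction i generalizing y with
  | zero => rfl
  | succ i ih => rw [Function.iterate_succ_apply, ih]; simp only [seqShift]; ring_nf

variable {Ω : Type*} [MeasurableSpace Ω] {μ : Measure Ω} {X : ℕ → Ω → ℝ}

lemma measurable_path (hX : ∀ n, Measurable (X n)) : Measurable (path X) :=
  measurable_pi_lambda _ hX

lemma identDistrib_of_measurePreserving_seqShift (hX : ∀ n, Measurable (X n))
    (hT : MeasurePreserving seqShift (μ.map (path X)) (μ.map (path X))) (i : ℕ) :
    ProbabilityTheory.IdentDistrib (X i) (X 0) μ μ where
  aemeasurable_fst := (hX i).aemeasurable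
  aemeasurable_snd := (hX 0).aemeasurable
  map_eq := by
    have hcomp : X i = (fun y : ℕ → ℝ => y 0) ∘ seqShift^[i] ∘ path X := by
      ext ω; simp [seqShift_iterate_apply, path]
    rw [hcomp, ← Measure.map_map (measurable_pi_apply 0)
      ((hT.iterate i).measurable.comp (measurable_path hX)),
      ← Measure.map_map (hT.iterate i).measurable (measurable_path hX), (hT.iterate i).map_eq,
      Measure.map_map (measurable_pi_apply 0) (measurable_path hX)]
    rfl

open scoped Classical in
theorem ae_tendsto_card_filter_mem_div [IsProbabilityMeasure μ] (hX : ∀ n, Measurable (X n))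
    (herg : Ergodic seqShift (μ.map (path X))) {s : Set ℝ} (hs : MeasurableSet s) :
    ∀ᵐ ω ∂μ, Tendsto (fun n => (#{i ∈ Finset.range n | X i ω ∈ s} : ℝ) / n) atTop
      (𝓝 (μ (X 0 ⁻¹' s)).toReal) := by
  have : IsProbabilityMeasure (μ.map (path X)) :=
    Measure.isProbabilityMeasure_map (measurable_path hX).aemeasurable
  have hs0 : MeasurableSet {y : ℕ → ℝ | y 0 ∈ s} := measurable_pi_apply 0 hs
  have hbirk := herg.ae_tendsto_birkhoffAverage (f := {y | y 0 ∈ s}.indicator 1)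
    (measurable_const.indicator hs0) (M := 1) fun y => by
      by_cases hy : y 0 ∈ s <;> simp [Set.indicator, hy]
  rw [integral_indicator_one hs0, measureReal_def,
    Measure.map_apply (measurable_path hX) hs0] at hbirk
  filter_upwards [ae_of_ae_map (measurable_path hX).aemeasurable hbirk] with ω hω
  convert hω using 2 with n
  · rw [Finset.natCast_card_filter]
    simp [birkhoffAverage, birkhoffSum, Set.indicator, seqShift_iterate_apply, path,
      div_eq_inv_mul]
  · rfl

end Stationary

section TailProbability

variable {Ω : Type*} [MeasurableSpace Ω] {μ : Measure Ω} {Y : Ω → ℝ}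

lemma measure_le_lt_one_of_lt_rightEndpoint {γ : ℝ} (hγ : rightEndpoint μ Y = γ) {r : ℝ}
    (hr : r < γ) : μ {ω | Y ω ≤ r} < 1 := by
  obtain ⟨_, ⟨s, hs, rfl⟩, hrs⟩ := lt_sSup_iff.1 (hγ ▸ EReal.coe_lt_coe_iff.2 hr :
    (r : EReal) < rightEndpoint μ Y)
  exact (measure_mono fun ω (hω : Y ω ≤ r) =>
    hω.trans (EReal.coe_lt_coe_iff.1 hrs).le).trans_lt hs

variable [IsProbabilityMeasure μ]

lemma measureReal_lt_eq_one_sub_cdf (hY : Measurable Y) (r : ℝ) :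
    (μ {ω | r < Y ω}).toReal = 1 - ProbabilityTheory.cdf (μ.map Y) r := by
  have : IsProbabilityMeasure (μ.map Y) := Measure.isProbabilityMeasure_map hY.aemeasurable
  rw [ProbabilityTheory.cdf_eq_real, map_measureReal_apply hY measurableSet_Iic,
    ← probReal_compl_eq_one_sub (hY measurableSet_Iic)]
  simp [measureReal_def, Set.compl_def]

lemma continuousAt_measureReal_lt (hY : Measurable Y) {b : ℝ} (hb : μ {ω | Y ω = b} = 0) :
    ContinuousAt (fun r => (μ {ω | r < Y ω}).toReal) b := by
  have : IsProbabilityMeasure (μ.map Y) := Measure.isProbabilityMeasure_map hY.aemeasurable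
  set F := ProbabilityTheory.cdf (μ.map Y)
  have hatom : F.measure {b} = 0 := by
    rw [ProbabilityTheory.measure_cdf, Measure.map_apply hY (measurableSet_singleton b)]
    exact hb
  rw [StieltjesFunction.measure_singleton, ENNReal.ofReal_eq_zero, sub_nonpos] at hatom
  have hF : ContinuousAt F b := by
    rw [F.mono.continuousAt_iff_leftLim_eq_rightLim, F.rightLim_eq]
    exact le_antisymm (F.mono.leftLim_le le_rfl) hatom
  simp_rw [measureReal_lt_eq_one_sub_cdf hY]
  exact continuousAt_const.sub hF

variable {γ : ℝ}

lemma measureReal_lt_pos_of_lt_rightEndpoint (hY : Measurable Y) (hγ : rightEndpoint μ Y = γ)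
    {r : ℝ} (hr : r < γ) : 0 < (μ {ω | r < Y ω}).toReal := by
  refine ENNReal.toReal_pos ?_ (measure_ne_top _ _)
  rw [show {ω | r < Y ω} = {ω | Y ω ≤ r}ᶜ by ext; simp,
    prob_compl_eq_one_sub (measurableSet_le hY measurable_const)]
  exact (tsub_pos_iff_lt.2 (measure_le_lt_one_of_lt_rightEndpoint hγ hr)).ne'

lemma measure_rightEndpoint_lt (hY : Measurable Y) (hγ : rightEndpoint μ Y = γ) :
    μ {ω | γ < Y ω} = 0 := by
  have hnull : ∀ q : ℚ, μ {ω | γ < q ∧ (q : ℝ) < Y ω} = 0 := fun q => by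
    by_cases hq : γ < q
    · have h1 : μ {ω | Y ω ≤ q} = 1 := by
        refine le_antisymm prob_le_one (not_lt.1 fun hlt => ?_)
        have hle : ((q : ℝ) : EReal) ≤ rightEndpoint μ Y := le_sSup ⟨q, hlt, rfl⟩
        exact (EReal.coe_le_coe_iff.1 (hγ ▸ hle)).not_gt hq
      rw [← prob_compl_eq_zero_iff (measurableSet_le hY measurable_const)] at h1
      exact measure_mono_null (fun ω hω => not_le.2 hω.2) h1
    · simp [hq]
  refine measure_mono_null (fun ω hω => ?_) (measure_iUnion_null hnull)
  obtain ⟨q, hγq, hqY⟩ := exists_rat_btwn (show γ < Y ω from hω)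
  exact Set.mem_iUnion.2 ⟨q, hγq, hqY⟩

end TailProbability

section OrderStatistics

variable {k n : ℕ} {x : ℕ → ℝ}

lemma ordStat_eq_getElem (h : k - 1 < n) :
    ordStat k n x = ((List.ofFn fun i : Fin n => x i).insertionSort (· ≤ ·))[k - 1]'
      (by simpa using h) := by
  rw [ordStat, List.getD_eq_getElem]

lemma ordStat_le_of_forall_le (h : k - 1 < n) {c : ℝ} (hx : ∀ i < n, x i ≤ c) :
    ordStat k n x ≤ c := by
  have hmem := List.getElem_mem (l := (List.ofFn fun i : Fin n => x i).insertionSort (· ≤ ·))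
    (by simpa using h)
  rw [(List.perm_insertionSort _ _).mem_iff, List.mem_ofFn] at hmem
  obtain ⟨i, hi⟩ := hmem
  rw [ordStat_eq_getElem h, ← hi]
  exact hx i i.isLt

lemma countP_ofFn_eq_card_filter {α : Type*} (n : ℕ) (x : ℕ → α) (p : α → Prop)
    [DecidablePred p] :
    (List.ofFn fun i : Fin n => x i).countP (fun y => decide (p y))
      = #{i ∈ Finset.range n | p (x i)} := by
  have hofFn : (List.ofFn fun i : Fin n => x i) = (List.range n).map x :=
    List.ext_getElem (by simp) (by simp)
  rw [hofFn, List.countP_map, Finset.card_def, Finset.filter_val, Finset.range_val,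
    Multiset.range, Multiset.filter_coe, Multiset.coe_card, List.countP_eq_length_filter]
  rfl

lemma lt_ordStat_of_card_filter_le_lt (h : k - 1 < n) {q : ℝ}
    (hcard : #{i ∈ Finset.range n | x i ≤ q} < k) : q < ordStat k n x := by
  set l := (List.ofFn fun i : Fin n => x i).insertionSort (· ≤ ·)
  by_contra! hle
  -- otherwise the first `k` sorted values would all be at most `q`
  have htake : ∀ y ∈ l.take k, decide (y ≤ q) = true := by
    intro y hy
    obtain ⟨j, hj, rfl⟩ := List.mem_iff_getElem.1 hy
    have hjk : j < k := by simp at hj; omega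
    rw [List.getElem_take, decide_eq_true_eq]
    refine le_trans ?_ ((ordStat_eq_getElem h).symm.trans_le hle)
    exact (List.pairwise_insertionSort _ _).rel_get_of_le (by simp; omega)
  have hk : k ≤ l.countP fun y => decide (y ≤ q) := by
    calc k = (l.take k).length := by simp [l]; omega
      _ = (l.take k).countP fun y => decide (y ≤ q) := (List.countP_eq_length.2 htake).symm
      _ ≤ _ := (List.take_sublist k l).countP_le
  rw [(List.perm_insertionSort _ _).countP_eq, countP_ofFn_eq_card_filter] at hk
  omega

lemma ordStat_add_const (h : k - 1 < n) (u : ℝ) :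
    ordStat k n (fun i => x i + u) = ordStat k n x + u := by
  have hsort : ((List.ofFn fun i : Fin n => x i + u).insertionSort (· ≤ ·))
      = ((List.ofFn fun i : Fin n => x i).insertionSort (· ≤ ·)).map (· + u) := by
    rw [List.map_insertionSort (· ≤ ·) (· ≤ ·) (fun y : ℝ => y + u) _
      fun a _ b _ => (add_le_add_iff_right u).symm, List.map_ofFn]
    rfl
  rw [ordStat, ordStat, hsort, List.getD_eq_getElem _ _ (by simpa using h),
    List.getD_eq_getElem _ _ (by simpa using h), List.getElem_map]

lemma nearCount_add_const (h : k - 1 < n) (a u : ℝ) :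
    nearCount k n a (fun i => x i + u) = nearCount k n a x := by
  simp only [nearCount, ordStat_add_const h]
  congr 1
  refine Finset.filter_congr fun i _ => ?_
  constructor <;> rintro ⟨h₁, h₂⟩ <;> constructor <;> linarith

lemma nearCount_add_card_filter_ordStat_le {a : ℝ} (ha : 0 < a) :
    nearCount k n a x + #{i ∈ Finset.range n | ordStat k n x ≤ x i}
      = #{i ∈ Finset.range n | ordStat k n x - a < x i} := by
  conv_rhs => rw [← Finset.card_filter_add_card_filter_not (fun i => x i < ordStat k n x),
    Finset.filter_filter, Finset.filter_filter]
  congr 2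
  exact Finset.filter_congr fun i _ =>
    ⟨fun hle => ⟨by linarith, not_lt.2 hle⟩, fun h => not_lt.1 h.2⟩

end OrderStatistics

section EmpiricalTail

variable {x : ℕ → ℝ} {G : ℝ → ℝ}

lemma tendsto_card_div_of_tendsto_threshold
    (hG : ∀ q : ℚ, Tendsto (fun n => (#{i ∈ Finset.range n | (q : ℝ) < x i} : ℝ) / n) atTop
      (𝓝 (G q)))
    {b : ℝ} (hGb : ContinuousAt G b) {t : ℕ → ℝ} (ht : Tendsto t atTop (𝓝 b)) {c : ℕ → ℕ}
    (hc : ∀ n, #{i ∈ Finset.range n | t n < x i} ≤ c n ∧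
      c n ≤ #{i ∈ Finset.range n | t n ≤ x i}) :
    Tendsto (fun n => (c n : ℝ) / n) atTop (𝓝 (G b)) := by
  refine tendsto_order.2 ⟨fun l hl => ?_, fun u hu => ?_⟩
  · obtain ⟨r, hbr, hr⟩ := exists_Ico_subset_of_mem_nhds (hGb.eventually (lt_mem_nhds hl))
      ⟨b + 1, by linarith⟩
    obtain ⟨q, hbq, hqr⟩ := exists_rat_btwn hbr
    filter_upwards [(hG q).eventually (lt_mem_nhds (hr ⟨hbq.le, hqr⟩)),
      ht.eventually (gt_mem_nhds hbq)] with n hn htn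
    refine hn.trans_le (div_le_div_of_nonneg_right ?_ n.cast_nonneg)
    exact_mod_cast (Finset.card_le_card <|
      Finset.monotone_filter_right _ fun _ _ hi => htn.trans hi).trans (hc n).1
  · obtain ⟨r, hrb, hr⟩ := exists_Ioc_subset_of_mem_nhds (hGb.eventually (gt_mem_nhds hu))
      ⟨b - 1, by linarith⟩
    obtain ⟨q, hrq, hqb⟩ := exists_rat_btwn hrb
    filter_upwards [(hG q).eventually (gt_mem_nhds (hr ⟨hrq, hqb.le⟩)),
      ht.eventually (lt_mem_nhds hqb)] with n hn htn
    refine (div_le_div_of_nonneg_right ?_ n.cast_nonneg).trans_lt hn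
    exact_mod_cast (hc n).2.trans (Finset.card_le_card <|
      Finset.monotone_filter_right _ fun _ _ hi => htn.trans_le hi)

variable {γ : ℝ} {k : ℕ → ℕ}

lemma tendsto_ordStat
    (hG : ∀ q : ℚ, Tendsto (fun n => (#{i ∈ Finset.range n | (q : ℝ) < x i} : ℝ) / n) atTop
      (𝓝 (G q)))
    (hx : ∀ i, x i ≤ γ) (hGpos : ∀ r < γ, 0 < G r) (hk : ∀ᶠ n in atTop, k n ≤ n)
    (hk1 : Tendsto (fun n => (k n : ℝ) / n) atTop (𝓝 1)) :
    Tendsto (fun n => ordStat (k n) n x) atTop (𝓝 γ) := by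
  have hk' : ∀ᶠ n in atTop, 0 < n ∧ k n - 1 < n := by
    filter_upwards [hk, eventually_gt_atTop 0] with n hkn hn using ⟨hn, by omega⟩
  refine tendsto_order.2 ⟨fun l hl => ?_, fun u hu => ?_⟩
  · obtain ⟨q, hlq, hqγ⟩ := exists_rat_btwn hl
    -- a proportion `G q > 0` of the sample exceeds `q` while `k n / n → 1`, so eventually
    -- fewer than `k n` sample points are at most `q`
    have hsum := (hk1.add (hG q)).eventually
      (lt_mem_nhds (lt_add_of_pos_right 1 (hGpos q hqγ)))
    filter_upwards [hsum, hk'] with n hn ⟨hn0, hkn⟩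
    refine hlq.trans (lt_ordStat_of_card_filter_le_lt hkn ?_)
    rw [← add_div, one_lt_div (by exact_mod_cast hn0)] at hn
    have hsplit := Finset.card_filter_add_card_filter_not (s := Finset.range n)
      (fun i => x i ≤ q)
    simp only [not_le, Finset.card_range] at hsplit
    have : n < k n + #{i ∈ Finset.range n | (q : ℝ) < x i} := by exact_mod_cast hn
    omega
  · filter_upwards [hk'] with n ⟨_, hkn⟩
    exact (ordStat_le_of_forall_le hkn fun i _ => hx i).trans_lt hu

theorem tendsto_nearCount_div
    (hG : ∀ q : ℚ, Tendsto (fun n => (#{i ∈ Finset.range n | (q : ℝ) < x i} : ℝ) / n) atTop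
      (𝓝 (G q)))
    (hx : ∀ i, x i ≤ γ) (hGpos : ∀ r < γ, 0 < G r) (hGγ : G γ = 0) (hGγc : ContinuousAt G γ)
    {a : ℝ} (ha : 0 < a) (hGac : ContinuousAt G (γ - a)) (hk : ∀ᶠ n in atTop, k n ≤ n)
    (hk1 : Tendsto (fun n => (k n : ℝ) / n) atTop (𝓝 1)) :
    Tendsto (fun n => (nearCount (k n) n a x : ℝ) / n) atTop (𝓝 (G (γ - a))) := by
  have hO := tendsto_ordStat hG hx hGpos hk hk1
  have hlow := tendsto_card_div_of_tendsto_threshold hG hGac (hO.sub_const a)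
    (c := fun n => #{i ∈ Finset.range n | ordStat (k n) n x - a < x i})
    fun n => ⟨le_rfl, Finset.card_le_card <|
      Finset.monotone_filter_right _ fun _ _ hi => hi.le⟩
  have hhigh := tendsto_card_div_of_tendsto_threshold hG hGγc hO
    (c := fun n => #{i ∈ Finset.range n | ordStat (k n) n x ≤ x i})
    fun n => ⟨Finset.card_le_card <|
      Finset.monotone_filter_right _ fun _ _ hi => hi.le, le_rfl⟩
  rw [← sub_zero (G (γ - a)), ← hGγ]
  refine (hlow.sub hhigh).congr fun n => ?_
  rw [← nearCount_add_card_filter_ordStat_le ha]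
  push_cast
  ring

end EmpiricalTail

theorem stmt16_general {Ω : Type*} [MeasurableSpace Ω] (μ : Measure Ω) [IsProbabilityMeasure μ]
    (X : ℕ → Ω → ℝ) (hX : ∀ n, Measurable (X n))
    (herg : Ergodic seqShift (Measure.map (path X) μ))
    (γ : ℝ) (hγ : rightEndpoint μ (X 0) = (γ : EReal))
    (a : ℝ) (ha : 0 < a)
    (h1 : μ {ω | X 0 ω = γ} = 0) (h2 : μ {ω | X 0 ω = γ - a} = 0)
    (U : Ω → ℝ)
    (k : ℕ → ℕ) (hk : ∀ n, 1 ≤ n → 1 ≤ k n ∧ k n ≤ n)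
    (hk1 : Tendsto (fun n => (k n : ℝ) / n) atTop (𝓝 1)) :
    ∀ᵐ ω ∂μ, Tendsto
      (fun n => (nearCount (k n) n a (fun i => X i ω + U ω) : ℝ) / n) atTop
      (𝓝 ((μ {ω' | γ - a < X 0 ω'}).toReal)) := by
  have hcount : ∀ᵐ ω ∂μ, ∀ q : ℚ, Tendsto
      (fun n => (#{i ∈ Finset.range n | (q : ℝ) < X i ω} : ℝ) / n) atTop
      (𝓝 (μ {ω' | (q : ℝ) < X 0 ω'}).toReal) :=
    ae_all_iff.2 fun q => by
      convert ae_tendsto_card_filter_mem_div hX herg (measurableSet_Ioi (a := (q : ℝ)))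
        using 7 <;> ext <;> simp
  have hbdd : ∀ᵐ ω ∂μ, ∀ i, X i ω ≤ γ := ae_all_iff.2 fun i => by
    have hi : μ (X i ⁻¹' Ioi γ) = μ (X 0 ⁻¹' Ioi γ) :=
      (identDistrib_of_measurePreserving_seqShift hX herg.toMeasurePreserving i).measure_mem_eq
        measurableSet_Ioi
    exact measure_mono_null (fun ω (hω : ¬X i ω ≤ γ) => not_le.1 hω)
      (hi.trans (measure_rightEndpoint_lt (hX 0) hγ))
  have hk' : ∀ᶠ n in atTop, k n ≤ n := (eventually_ge_atTop 1).mono fun n hn => (hk n hn).2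
  filter_upwards [hcount, hbdd] with ω hcount hbdd
  refine (tendsto_nearCount_div hcount hbdd
    (fun r hr => measureReal_lt_pos_of_lt_rightEndpoint (hX 0) hγ hr)
    (by simp [measure_rightEndpoint_lt (hX 0) hγ]) (continuousAt_measureReal_lt (hX 0) h1) ha
    (continuousAt_measureReal_lt (hX 0) h2) hk' hk1).congr' ?_
  filter_upwards [eventually_ge_atTop 1] with n hn
  rw [nearCount_add_const (by have := hk n hn; omega)]

theorem stmt16 {Ω : Type*} [MeasurableSpace Ω] (μ : Measure Ω) [IsProbabilityMeasure μ]
    (X : ℕ → Ω → ℝ) (hX : ∀ n, Measurable (X n))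
    (herg : Ergodic seqShift (Measure.map (path X) μ))
    (γ : ℝ) (hγ : rightEndpoint μ (X 0) = (γ : EReal))
    (a : ℝ) (ha : 0 < a)
    (h1 : μ {ω | X 0 ω = γ} = 0) (h2 : μ {ω | X 0 ω = γ - a} = 0)
    (U : Ω → ℝ) (hU : Measurable U)
    (k : ℕ → ℕ) (hk : ∀ n, 1 ≤ n → 1 ≤ k n ∧ k n ≤ n)
    (hk1 : Tendsto (fun n => (k n : ℝ) / n) atTop (𝓝 1)) :
    ∀ᵐ ω ∂μ, Tendsto
      (fun n => (nearCount (k n) n a (fun i => X i ω + U ω) : ℝ) / n) atTop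
      (𝓝 ((μ {ω' | γ - a < X 0 ω'}).toReal)) :=
  stmt16_general μ X hX herg γ hγ a ha h1 h2 U k hk hk1
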